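/- Let G be a locally finite simple connected graph and fix a starting vertex a. For every initial rotor configuration ρ and every vertex x, liminf_{n→∞} S_n(ρ,x)/n ≥ G(a,x), where S_n(ρ,x) is the total number of visits to x by n sequential rotor walks with empty sink and G(a,x) is the Green function of simple random walk (interpreted as +∞ if G is recurrent). -/

import Mathlib

open MeasureTheory Filter ENNReal Set

namespace RotorWalk

variable {V : Type*} [DecidableEq V]

/-- One step of the rotor walk with local mechanisms `τ`:
the rotor at the current position is advanced and the walker follows it. -/
def step (τ : V → V → V) (p : V × (V → V)) : V × (V → V) :=
  (τ p.1 (p.2 p.1), Function.update p.2 p.1 (τ p.1 (p.2 p.1)))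

/-- Trajectory (position, rotor configuration) of the rotor walk started at `a`
with initial rotor configuration `ρ`. -/
def traj (τ : V → V → V) (a : V) (ρ : V → V) : ℕ → V × (V → V)
  | 0 => (a, ρ)
  | t + 1 => step τ (traj τ a ρ t)

/-- Position of the walker at time `t`. -/
def pos (τ : V → V → V) (a : V) (ρ : V → V) (t : ℕ) : V := (traj τ a ρ t).1

/-- Rotor configuration at time `t`. -/
def conf (τ : V → V → V) (a : V) (ρ : V → V) (t : ℕ) : V → V := (traj τ a ρ t).2

/-- The walk has not hit the sink `Z` up to and including time `t`. -/
def aliveAt (τ : V → V → V) (Z : Set V) (a : V) (ρ : V → V) (t : ℕ) : Prop :=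
  ∀ s ≤ t, pos τ a ρ s ∉ Z

/-- Odometer: the number of visits to `x` strictly before hitting the sink `Z`. -/
noncomputable def odometer (τ : V → V → V) (Z : Set V) (a : V) (ρ : V → V) (x : V) : ℕ∞ :=
  {t : ℕ | aliveAt τ Z a ρ t ∧ pos τ a ρ t = x}.encard

/-- Number of traversals of the directed edge `(y, x)` strictly before hitting `Z`. -/
noncomputable def edgeCount (τ : V → V → V) (Z : Set V) (a : V) (ρ : V → V) (y x : V) : ℕ∞ :=
  {t : ℕ | aliveAt τ Z a ρ t ∧ pos τ a ρ t = y ∧ pos τ a ρ (t + 1) = x}.encard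

open Classical in
/-- The final rotor configuration: the configuration at the hitting time of `Z` if the walk
hits `Z`, and otherwise the pointwise eventual value of the rotor configuration
(which exists when the walk is transient). -/
noncomputable def finalConf (τ : V → V → V) (Z : Set V) (a : V) (ρ : V → V) : V → V :=
  if ∃ t, pos τ a ρ t ∈ Z then conf τ a ρ (sInf {t | pos τ a ρ t ∈ Z})
  else fun x => if h : ∃ v, ∀ᶠ t in atTop, conf τ a ρ t x = v then h.choose else ρ x

/-- Total number of visits to `x` by `n` sequential rotor walks (rotors not reset). -/
noncomputable def Svis (τ : V → V → V) (Z : Set V) (a : V) (ρ : V → V) (n : ℕ) (x : V) : ℕ∞ :=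
  ∑ i ∈ Finset.range n, odometer τ Z a ((finalConf τ Z a)^[i] ρ) x

/-- Total number of traversals of the directed edge `(y,x)` by `n` sequential rotor walks. -/
noncomputable def Sedge (τ : V → V → V) (Z : Set V) (a : V) (ρ : V → V) (n : ℕ) (y x : V) : ℕ∞ :=
  ∑ i ∈ Finset.range n, edgeCount τ Z a ((finalConf τ Z a)^[i] ρ) y x

/-- The rotor walk is transient: every vertex is visited finitely often (before hitting `Z`). -/
def IsTransientWalk (τ : V → V → V) (Z : Set V) (a : V) (ρ : V → V) : Prop :=
  ∀ x : V, {t : ℕ | aliveAt τ Z a ρ t ∧ pos τ a ρ t = x}.Finite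

open Classical in
/-- Total number of visits to `x` by `n` sequential rotor walks with empty sink,
set to `⊤` if one of the `n` walks fails to be transient. -/
noncomputable def SvisT (τ : V → V → V) (a : V) (ρ : V → V) (n : ℕ) (x : V) : ℕ∞ :=
  if ∀ i < n, IsTransientWalk τ ∅ a ((finalConf τ ∅ a)^[i] ρ) then Svis τ ∅ a ρ n x else ⊤

/-- The local mechanisms map neighbors to neighbors and have a single orbit on each
neighborhood (off the sink). -/
def ValidMechanism (G : SimpleGraph V) (Z : Set V) (τ : V → V → V) : Prop :=
  ∀ x ∉ Z, (∀ y, G.Adj x y → G.Adj x (τ x y)) ∧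
    ∀ y, G.Adj x y → ∀ z, G.Adj x z → ∃ i : ℕ, (τ x)^[i] y = z

/-- A rotor configuration: every rotor (off the sink) points to a neighbor. -/
def ValidConfig (G : SimpleGraph V) (Z : Set V) (ρ : V → V) : Prop :=
  ∀ x ∉ Z, G.Adj x (ρ x)

/-- Time-`t` distribution of the simple random walk started at `a` and killed on `Z`. -/
noncomputable def srw (G : SimpleGraph V) [G.LocallyFinite] (Z : Set V) (a : V) :
    ℕ → V → ℝ≥0∞
  | 0 => Set.indicator {a} 1
  | t + 1 => fun x =>
      ∑' y : V, Set.indicator {y | G.Adj y x ∧ y ∉ Z}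
        (fun y => srw G Z a t y / (G.degree y : ℝ≥0∞)) y

/-- Green function: the expected number of visits to a vertex, strictly before hitting `Z`,
of the simple random walk started at `a`. -/
noncomputable def green (G : SimpleGraph V) [G.LocallyFinite] (Z : Set V) (a : V) : V → ℝ≥0∞ :=
  Set.indicator Zᶜ (fun x => ∑' t : ℕ, srw G Z a t x)

/-- The graph is transient: the Green function (with empty sink) is finite. -/
def TransientGraph (G : SimpleGraph V) [G.LocallyFinite] : Prop :=
  ∀ a x : V, green G ∅ a x < ⊤

/-- A `Z`-oriented spanning forest, encoded as a rotor configuration: off `Z` it points to a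
neighbor, on `Z` it is normalized to the identity, and every vertex eventually reaches `Z`. -/
def IsOSF (G : SimpleGraph V) (Z : Set V) (ρ : V → V) : Prop :=
  (∀ x ∉ Z, G.Adj x (ρ x)) ∧ (∀ x ∈ Z, ρ x = x) ∧ ∀ x : V, ∃ n : ℕ, ρ^[n] x ∈ Z

/-- An oriented spanning forest of an infinite graph: every vertex has out-degree one along
an edge and there is no directed cycle. -/
def IsOSFInf (G : SimpleGraph V) (ρ : V → V) : Prop :=
  (∀ x, G.Adj x (ρ x)) ∧ ∀ x : V, ∀ n > 0, ρ^[n] x ≠ x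

/-- A spanning forest of the ball of radius `R` around `a`, oriented toward the boundary
sphere (the sink), normalized to the identity outside the open ball. -/
def IsOSFBall (G : SimpleGraph V) (a : V) (R : ℕ) (ρ : V → V) : Prop :=
  (∀ x, G.dist a x < R → G.Adj x (ρ x)) ∧
  (∀ x, ¬ G.dist a x < R → ρ x = x) ∧
  ∀ x, G.dist a x < R → ∃ n : ℕ, G.dist a (ρ^[n] x) = R

instance : MeasurableSpace (V → V) := ⊤

/-- `μ` is the oriented wired uniform spanning forest measure of `G` (with respect to the
exhaustion by balls around `a`): it is a probability measure supported on oriented spanning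
forests whose finite-dimensional marginals are the limits of the uniform measures on
boundary-oriented spanning forests of the balls. -/
def IsOWUSF (G : SimpleGraph V) (a : V) (μ : Measure (V → V)) : Prop :=
  IsProbabilityMeasure μ ∧
  (∀ᵐ ρ ∂μ, IsOSFInf G ρ) ∧
  ∀ B : Finset (V × V),
    Tendsto (fun R : ℕ =>
        (({ρ : V → V | IsOSFBall G a R ρ ∧ ∀ e ∈ B, ρ e.1 = e.2}.ncard : ℝ) /
          ({ρ : V → V | IsOSFBall G a R ρ}.ncard : ℝ))) atTop
      (nhds ((μ {ρ : V → V | ∀ e ∈ B, ρ e.1 = e.2}).toReal))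

/-- Vertex-transitivity. -/
def VertexTransitive (G : SimpleGraph V) : Prop :=
  ∀ u v : V, ∃ φ : G ≃g G, φ u = v

/-- `μ` is stationary for the rotor walk (empty sink) started at `a`: almost every walk is
transient and the final rotor configuration again has law `μ`. -/
def RWStationary (τ : V → V → V) (a : V) (μ : Measure (V → V)) : Prop :=
  (∀ᵐ ρ ∂μ, IsTransientWalk τ ∅ a ρ) ∧ μ.map (finalConf τ ∅ a) = μ


/-!
Let `M_n(y)` be the number of visits to `y` by the first `n` walks. Since the rotors are never
reset, the rotor at `y` has been advanced `M_n(y)` times around its cycle of length `deg y`, so it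
has pointed at a neighbour `x` at least `M_n(y) / deg y - 1` times, and each time the walker
stepped to `x`. Sorting the visits to `x` by where they come from gives
`n [x = a] + ∑_{y ~ x} M_n(y) / deg y ≤ M_n(x) + deg x`,
while the truncated Green function `g_T(x) = ∑_{t < T} p_t(a, x)` satisfies
`g_{T+1}(x) = [x = a] + ∑_{y ~ x} g_T(y) / deg y`. Induction on `T` gives
`n g_T(x) ≤ M_n(x) + C_T(x)`; divide by `n`, let `n → ∞`, then `T → ∞`. If one of the walks is
recurrent, `S_n = ∞` for all large `n`.
-/

open scoped Finset
open Function

section RotorHits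

variable {α : Type*}

lemma minimalPeriod_le_card_of_mapsTo {σ : α → α} {s : Finset α} (hs : Set.MapsTo σ s s)
    {v : α} (hv : v ∈ s) : minimalPeriod σ v ≤ #s := by
  calc minimalPeriod σ v = #(Finset.range (minimalPeriod σ v)) := (Finset.card_range _).symm
    _ ≤ #s := Finset.card_le_card_of_injOn (σ^[·] v) (fun j _ => hs.iterate j hv)
      (iterate_injOn_Iio_minimalPeriod.mono fun _ hj => Finset.mem_range.1 hj)

variable [DecidableEq α]

def rotorHits (σ : α → α) (v x : α) (M : ℕ) : ℕ :=
  #{j ∈ Finset.range M | σ^[j + 1] v = x}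

@[simp]
lemma rotorHits_zero (σ : α → α) (v x : α) : rotorHits σ v x 0 = 0 := rfl

lemma rotorHits_succ (σ : α → α) (v x : α) (M : ℕ) :
    rotorHits σ v x (M + 1) = rotorHits σ v x M + if σ^[M + 1] v = x then 1 else 0 := by
  simp only [rotorHits, Finset.card_filter, Finset.sum_range_succ]

lemma rotorHits_add (σ : α → α) (v x : α) (A m : ℕ) :
    rotorHits σ v x (A + m) = rotorHits σ v x A + rotorHits σ (σ^[A] v) x m := by
  simp only [rotorHits, Finset.card_filter, Finset.sum_range_add]
  refine congrArg _ (Finset.sum_congr rfl fun j _ => ?_)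
  rw [← iterate_add_apply, show j + 1 + A = A + j + 1 by omega]

lemma one_le_rotorHits_of_isPeriodicPt {σ : α → α} {v x : α} {d i : ℕ} (hd : 0 < d)
    (hv : IsPeriodicPt σ d v) (hx : σ^[i] v = x) : 1 ≤ rotorHits σ v x d := by
  have hj : σ^[(i + d - 1) % d + 1] v = x := by
    rw [iterate_succ_apply', hv.iterate_mod_apply, ← iterate_succ_apply' σ,
      show (i + d - 1).succ = i + d by omega, iterate_add_apply, hv.eq, hx]
  exact Finset.card_pos.2 ⟨_, Finset.mem_filter.2 ⟨Finset.mem_range.2 (Nat.mod_lt _ hd), hj⟩⟩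

/-- Along a cycle of length `d`, every window of `d` consecutive rotor positions contains `x`. -/
lemma le_mul_rotorHits_add_one {σ : α → α} {v x : α} {d i : ℕ} (hd : 0 < d)
    (hv : IsPeriodicPt σ d v) (hx : σ^[i] v = x) (M : ℕ) :
    M ≤ d * (rotorHits σ v x M + 1) := by
  induction M using Nat.strong_induction_on with
  | _ M ih =>
    rcases lt_or_ge M d with hM | hM
    · nlinarith
    · obtain ⟨k, rfl⟩ := Nat.exists_eq_add_of_le hM
      have hk := ih k (by omega)
      have hfirst := one_le_rotorHits_of_isPeriodicPt hd hv hx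
      rw [rotorHits_add, hv.eq]
      nlinarith

end RotorHits

section SingleWalk

variable {V : Type*} [DecidableEq V] (τ : V → V → V) (a : V) (ρ : V → V)

@[simp]
lemma pos_zero : pos τ a ρ 0 = a := rfl

lemma pos_succ (T : ℕ) : pos τ a ρ (T + 1) = τ (pos τ a ρ T) (conf τ a ρ T (pos τ a ρ T)) := rfl

lemma conf_succ (T : ℕ) :
    conf τ a ρ (T + 1) = update (conf τ a ρ T) (pos τ a ρ T) (pos τ a ρ (T + 1)) := rfl

def visitsBefore (y : V) (T : ℕ) : ℕ :=
  #{s ∈ Finset.range T | pos τ a ρ s = y}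

/-- The number of visits to `y`; a junk value `0` if there are infinitely many. -/
noncomputable def visits (y : V) : ℕ :=
  {t | pos τ a ρ t = y}.ncard

lemma visitsBefore_succ (y : V) (T : ℕ) :
    visitsBefore τ a ρ y (T + 1) = visitsBefore τ a ρ y T + if pos τ a ρ T = y then 1 else 0 := by
  simp only [visitsBefore, Finset.card_filter, Finset.sum_range_succ]

lemma conf_apply_eq_iterate (y : V) (T : ℕ) :
    conf τ a ρ T y = (τ y)^[visitsBefore τ a ρ y T] (ρ y) := by
  induction T with
  | zero => rfl
  | succ T ih =>
    rw [conf_succ, visitsBefore_succ]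
    by_cases h : pos τ a ρ T = y
    · subst h
      rw [update_self, if_pos rfl, iterate_succ_apply', ← ih, pos_succ]
    · rw [update_of_ne (Ne.symm h), if_neg h, add_zero, ih]

lemma pos_succ_eq_iterate (T : ℕ) :
    pos τ a ρ (T + 1) =
      (τ (pos τ a ρ T))^[visitsBefore τ a ρ (pos τ a ρ T) T + 1] (ρ (pos τ a ρ T)) := by
  rw [pos_succ, conf_apply_eq_iterate, iterate_succ_apply']

/-- Each visit to `x` after time `0` arrives from a vertex `y` whose rotor, just advanced, points
at `x`; the rotor of `y` is then at position `visitsBefore y T` of its cycle. -/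
lemma ite_add_sum_rotorHits_visitsBefore_le (x : V) (s : Finset V) (T : ℕ) :
    (if x = a then 1 else 0) + ∑ y ∈ s, rotorHits (τ y) (ρ y) x (visitsBefore τ a ρ y T) ≤
      visitsBefore τ a ρ x (T + 1) := by
  induction T with
  | zero => by_cases h : x = a <;> simp [visitsBefore, Finset.filter_singleton, h]
  | succ T ih =>
    set p := pos τ a ρ T
    have hstep : ∀ y, rotorHits (τ y) (ρ y) x (visitsBefore τ a ρ y (T + 1)) =
        rotorHits (τ y) (ρ y) x (visitsBefore τ a ρ y T) +
          if p = y then (if pos τ a ρ (T + 1) = x then 1 else 0) else 0 := by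
      intro y
      rw [visitsBefore_succ]
      by_cases hy : p = y
      · rw [if_pos hy, if_pos hy, rotorHits_succ, ← hy, ← pos_succ_eq_iterate]
      · rw [if_neg hy, if_neg hy, add_zero, add_zero]
    rw [Finset.sum_congr rfl fun y _ => hstep y, Finset.sum_add_distrib, Finset.sum_ite_eq,
      visitsBefore_succ τ a ρ x (T + 1)]
    split_ifs at ih ⊢ <;> omega

variable {τ a ρ}

lemma finite_setOf_pos_eq (hT : IsTransientWalk τ ∅ a ρ) (y : V) :
    {t | pos τ a ρ t = y}.Finite := by
  simpa [aliveAt] using hT y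

lemma eventually_visitsBefore_eq_visits (hT : IsTransientWalk τ ∅ a ρ) (y : V) :
    ∀ᶠ T in atTop, visitsBefore τ a ρ y T = visits τ a ρ y := by
  have hfin := finite_setOf_pos_eq hT y
  obtain ⟨N, hN⟩ := hfin.bddAbove
  refine eventually_atTop.2 ⟨N + 1, fun T hT => ?_⟩
  rw [visits, Set.ncard_eq_toFinset_card _ hfin, visitsBefore]
  congr 1
  ext t
  simp only [Finset.mem_filter, Finset.mem_range, Set.Finite.mem_toFinset, Set.mem_ofPred_eq,
    and_iff_right_iff_imp]
  exact fun ht => by have := hN ht; omega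

lemma odometer_eq_visits (hT : IsTransientWalk τ ∅ a ρ) (x : V) :
    odometer τ ∅ a ρ x = visits τ a ρ x := by
  simpa [odometer, aliveAt, visits] using ((finite_setOf_pos_eq hT x).cast_ncard_eq).symm

lemma finalConf_apply (hT : IsTransientWalk τ ∅ a ρ) (y : V) :
    finalConf τ ∅ a ρ y = (τ y)^[visits τ a ρ y] (ρ y) := by
  have hconf : ∀ᶠ t in atTop, conf τ a ρ t y = (τ y)^[visits τ a ρ y] (ρ y) :=
    (eventually_visitsBefore_eq_visits hT y).mono fun t ht => by rw [conf_apply_eq_iterate, ht]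
  have hlim : ∃ w, ∀ᶠ t in atTop, conf τ a ρ t y = w := ⟨_, hconf⟩
  rw [finalConf, if_neg (by simp), dif_pos hlim]
  obtain ⟨t, hchoose, ht⟩ := (hlim.choose_spec.and hconf).exists
  exact hchoose.symm.trans ht

lemma ite_add_sum_rotorHits_visits_le (hT : IsTransientWalk τ ∅ a ρ) (x : V) (s : Finset V) :
    (if x = a then 1 else 0) + ∑ y ∈ s, rotorHits (τ y) (ρ y) x (visits τ a ρ y) ≤
      visits τ a ρ x := by
  obtain ⟨T, hs, hx⟩ := ((s.eventually_all.2 fun y _ => eventually_visitsBefore_eq_visits hT y).and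
    ((tendsto_add_atTop_nat 1).eventually (eventually_visitsBefore_eq_visits hT x))).exists
  calc _ = (if x = a then 1 else 0) +
        ∑ y ∈ s, rotorHits (τ y) (ρ y) x (visitsBefore τ a ρ y T) := by
        rw [Finset.sum_congr rfl fun y hy => by rw [← hs y hy]]
    _ ≤ visitsBefore τ a ρ x (T + 1) := ite_add_sum_rotorHits_visitsBefore_le τ a ρ x s T
    _ = visits τ a ρ x := hx

end SingleWalk

section SequentialWalks

variable {V : Type*} [DecidableEq V] (τ : V → V → V) (a : V) (ρ : V → V)

noncomputable def totalVisits (n : ℕ) (y : V) : ℕ :=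
  ∑ i ∈ Finset.range n, visits τ a ((finalConf τ ∅ a)^[i] ρ) y

lemma totalVisits_succ (n : ℕ) (y : V) :
    totalVisits τ a ρ (n + 1) y = totalVisits τ a ρ n y + visits τ a ((finalConf τ ∅ a)^[n] ρ) y :=
  Finset.sum_range_succ _ _

variable {τ a ρ}

lemma iterate_finalConf_apply {n : ℕ}
    (hT : ∀ i < n, IsTransientWalk τ ∅ a ((finalConf τ ∅ a)^[i] ρ)) (y : V) :
    (finalConf τ ∅ a)^[n] ρ y = (τ y)^[totalVisits τ a ρ n y] (ρ y) := by
  induction n with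
  | zero => rfl
  | succ n ih =>
    rw [iterate_succ_apply', finalConf_apply (hT n n.lt_add_one), ih fun i hi => hT i (by omega),
      ← iterate_add_apply, totalVisits_succ, add_comm]

/-- Since the rotors are not reset, the `n` walks together advance the rotor of `y` along its
cycle exactly as one long walk would. -/
lemma ite_add_sum_rotorHits_totalVisits_le {n : ℕ}
    (hT : ∀ i < n, IsTransientWalk τ ∅ a ((finalConf τ ∅ a)^[i] ρ)) (x : V) (s : Finset V) :
    (if x = a then n else 0) + ∑ y ∈ s, rotorHits (τ y) (ρ y) x (totalVisits τ a ρ n y) ≤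
      totalVisits τ a ρ n x := by
  induction n with
  | zero => simp [totalVisits]
  | succ n ih =>
    have hlast := ite_add_sum_rotorHits_visits_le (hT n n.lt_add_one) x s
    have hsplit : ∀ y, rotorHits (τ y) (ρ y) x (totalVisits τ a ρ (n + 1) y) =
        rotorHits (τ y) (ρ y) x (totalVisits τ a ρ n y) +
          rotorHits (τ y) ((finalConf τ ∅ a)^[n] ρ y) x (visits τ a ((finalConf τ ∅ a)^[n] ρ) y) :=
      fun y => by
        rw [totalVisits_succ, rotorHits_add, iterate_finalConf_apply fun i hi => hT i (by omega)]
    have ih := ih fun i hi => hT i (by omega)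
    rw [Finset.sum_congr rfl fun y _ => hsplit y, Finset.sum_add_distrib, totalVisits_succ]
    split_ifs at ih hlast ⊢ <;> omega

end SequentialWalks

section Graph

variable {V : Type*} [DecidableEq V] {G : SimpleGraph V} [G.LocallyFinite] {τ : V → V → V}

lemma ValidMechanism.le_degree_mul_rotorHits_add_one (hτ : ValidMechanism G ∅ τ) {y v x : V}
    (hv : G.Adj y v) (hx : G.Adj y x) (M : ℕ) :
    M ≤ G.degree y * (rotorHits (τ y) v x M + 1) := by
  obtain ⟨hmaps, horbit⟩ := hτ y (Set.notMem_empty y)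
  obtain ⟨i, hi⟩ := horbit _ (hmaps v hv) v hv
  have hper : IsPeriodicPt (τ y) (i + 1) v := by
    rwa [IsPeriodicPt, IsFixedPt, iterate_succ_apply]
  obtain ⟨j, hj⟩ := horbit v hv x hx
  have hdeg : minimalPeriod (τ y) v ≤ G.degree y := by
    rw [← G.card_neighborFinset_eq_degree]
    exact minimalPeriod_le_card_of_mapsTo (fun z hz => by simpa using hmaps z (by simpa using hz))
      (by simpa using hv)
  calc M ≤ minimalPeriod (τ y) v * (rotorHits (τ y) v x M + 1) :=
        le_mul_rotorHits_add_one (hper.minimalPeriod_pos i.succ_pos)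
          (isPeriodicPt_minimalPeriod _ _) hj M
    _ ≤ _ := Nat.mul_le_mul_right _ hdeg

variable {a : V}

lemma ite_add_sum_totalVisits_div_degree_le (hτ : ValidMechanism G ∅ τ) {ρ : V → V}
    (hρ : ValidConfig G ∅ ρ) {n : ℕ}
    (hT : ∀ i < n, IsTransientWalk τ ∅ a ((finalConf τ ∅ a)^[i] ρ)) (x : V) :
    (if x = a then (n : ℝ≥0∞) else 0) +
        ∑ y ∈ G.neighborFinset x, (totalVisits τ a ρ n y : ℝ≥0∞) / G.degree y ≤
      totalVisits τ a ρ n x + G.degree x := by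
  have hdiv : ∀ y ∈ G.neighborFinset x, (totalVisits τ a ρ n y : ℝ≥0∞) / G.degree y ≤
      rotorHits (τ y) (ρ y) x (totalVisits τ a ρ n y) + 1 := fun y hy => by
    refine ENNReal.div_le_of_le_mul' ?_
    exact_mod_cast hτ.le_degree_mul_rotorHits_add_one (hρ y (Set.notMem_empty y))
      ((G.mem_neighborFinset x y).1 hy).symm _
  have hcount := ite_add_sum_rotorHits_totalVisits_le hT x (G.neighborFinset x)
  calc _ ≤ (if x = a then (n : ℝ≥0∞) else 0) +
        ∑ y ∈ G.neighborFinset x, ((rotorHits (τ y) (ρ y) x (totalVisits τ a ρ n y) : ℝ≥0∞) + 1) :=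
        by gcongr with y hy; exact hdiv y hy
    _ = (((if x = a then n else 0) +
        ∑ y ∈ G.neighborFinset x, rotorHits (τ y) (ρ y) x (totalVisits τ a ρ n y) : ℕ) :
          ℝ≥0∞) + G.degree x := by
        rw [Finset.sum_add_distrib, Finset.sum_const, G.card_neighborFinset_eq_degree]
        push_cast
        split_ifs <;> simp [add_assoc]
    _ ≤ _ := by gcongr

end Graph

section Green

variable {V : Type*} (G : SimpleGraph V) [G.LocallyFinite] (a : V)

lemma srw_succ_apply (t : ℕ) (x : V) :
    srw G ∅ a (t + 1) x = ∑ y ∈ G.neighborFinset x, srw G ∅ a t y / G.degree y := by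
  simp only [srw]
  rw [tsum_eq_sum fun y hy =>
    Set.indicator_of_notMem (fun h => hy ((G.mem_neighborFinset x y).2 h.1.symm)) _]
  refine Finset.sum_congr rfl fun y hy => Set.indicator_of_mem ?_ _
  simpa using ((G.mem_neighborFinset x y).1 hy).symm

lemma green_eq_iSup_sum_srw (x : V) :
    green G ∅ a x = ⨆ T : ℕ, ∑ t ∈ Finset.range T, srw G ∅ a t x := by
  simp [green, ENNReal.tsum_eq_iSup_nat]

variable [DecidableEq V]

lemma srw_zero_apply (x : V) : srw G ∅ a 0 x = if x = a then 1 else 0 := by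
  simp [srw, Set.indicator]

lemma sum_srw_succ (T : ℕ) (x : V) :
    ∑ t ∈ Finset.range (T + 1), srw G ∅ a t x =
      (if x = a then 1 else 0) +
        ∑ y ∈ G.neighborFinset x, (∑ t ∈ Finset.range T, srw G ∅ a t y) / G.degree y := by
  simp only [Finset.sum_range_succ', srw_succ_apply, srw_zero_apply]
  rw [Finset.sum_comm, add_comm]
  simp only [div_eq_mul_inv, Finset.sum_mul]

lemma exists_mul_sum_srw_le_add {u : ℕ → V → ℝ≥0∞}
    (hu : ∀ (n : ℕ) x, (if x = a then (n : ℝ≥0∞) else 0) +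
      ∑ y ∈ G.neighborFinset x, u n y / G.degree y ≤ u n x + G.degree x) (T : ℕ) (x : V) :
    ∃ C ≠ ⊤, ∀ n : ℕ, n * ∑ t ∈ Finset.range T, srw G ∅ a t x ≤ u n x + C := by
  induction T generalizing x with
  | zero => exact ⟨0, ENNReal.zero_ne_top, fun n => by simp⟩
  | succ T ih =>
    choose C hC hCu using ih
    have hdeg : ∀ y ∈ G.neighborFinset x, (G.degree y : ℝ≥0∞) ≠ 0 := fun y hy => by
      simpa [← pos_iff_ne_zero, G.degree_pos_iff_exists_adj] using
        ⟨x, ((G.mem_neighborFinset x y).1 hy).symm⟩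
    refine ⟨G.degree x + ∑ y ∈ G.neighborFinset x, C y / G.degree y, ?_, fun n => ?_⟩
    · exact ENNReal.add_ne_top.2 ⟨ENNReal.natCast_ne_top _, ENNReal.sum_ne_top.2 fun y hy =>
        ENNReal.div_ne_top (hC y) (hdeg y hy)⟩
    calc (n : ℝ≥0∞) * ∑ t ∈ Finset.range (T + 1), srw G ∅ a t x
        = (if x = a then (n : ℝ≥0∞) else 0) + ∑ y ∈ G.neighborFinset x,
            (n * ∑ t ∈ Finset.range T, srw G ∅ a t y) / G.degree y := by
          rw [sum_srw_succ, mul_add, mul_ite, mul_one, mul_zero, Finset.mul_sum]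
          simp only [mul_div_assoc]
      _ ≤ (if x = a then (n : ℝ≥0∞) else 0) + ∑ y ∈ G.neighborFinset x,
            (u n y + C y) / G.degree y := by
          gcongr with y; exact hCu y n
      _ = ((if x = a then (n : ℝ≥0∞) else 0) + ∑ y ∈ G.neighborFinset x, u n y / G.degree y) +
            ∑ y ∈ G.neighborFinset x, C y / G.degree y := by
          simp only [ENNReal.add_div, Finset.sum_add_distrib, add_assoc]
      _ ≤ u n x + G.degree x + ∑ y ∈ G.neighborFinset x, C y / G.degree y := by
          gcongr ?_ + _; exact hu n x
      _ = _ := add_assoc _ _ _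

end Green

lemma le_liminf_div_of_mul_le_add {g C : ℝ≥0∞} (hC : C ≠ ⊤) {u : ℕ → ℝ≥0∞}
    (h : ∀ n : ℕ, n * g ≤ u n + C) : g ≤ liminf (fun n => u n / n) atTop := by
  have hlim : Tendsto (fun n : ℕ => C / n) atTop (nhds 0) := by
    simpa [div_eq_mul_inv] using
      ENNReal.Tendsto.const_mul ENNReal.tendsto_inv_nat_nhds_zero (Or.inr hC)
  rw [← ENNReal.liminf_add_of_right_tendsto_zero hlim]
  refine le_liminf_of_le (by isBoundedDefault) (eventually_atTop.2 ⟨1, fun n hn => ?_⟩)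
  rw [Pi.add_apply, ← ENNReal.add_div, ENNReal.le_div_iff_mul_le
    (Or.inl (Nat.cast_ne_zero.2 (by omega))) (Or.inl (ENNReal.natCast_ne_top n)), mul_comm]
  exact h n

section Occupation

variable {V : Type*} [DecidableEq V] {τ : V → V → V} {a : V} {ρ : V → V}

lemma SvisT_eq_totalVisits {n : ℕ}
    (hT : ∀ i < n, IsTransientWalk τ ∅ a ((finalConf τ ∅ a)^[i] ρ)) (x : V) :
    SvisT τ a ρ n x = totalVisits τ a ρ n x := by
  rw [SvisT, if_pos hT, Svis, totalVisits, Nat.cast_sum]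
  exact Finset.sum_congr rfl fun i hi => odometer_eq_visits (hT i (Finset.mem_range.1 hi)) x

lemma SvisT_eq_top {n : ℕ} (hT : ¬ ∀ i < n, IsTransientWalk τ ∅ a ((finalConf τ ∅ a)^[i] ρ))
    (x : V) : SvisT τ a ρ n x = ⊤ := by
  rw [SvisT, if_neg hT]

end Occupation

theorem green_le_liminf_occupation_rate_general
    {V : Type*} [DecidableEq V]
    (G : SimpleGraph V) [G.LocallyFinite]
    (τ : V → V → V) (hτ : ValidMechanism G ∅ τ) (a : V)
    (ρ : V → V) (hρ : ValidConfig G ∅ ρ) (x : V) :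
    green G ∅ a x ≤
      Filter.liminf (fun n : ℕ => (SvisT τ a ρ n x : ℝ≥0∞) / (n : ℝ≥0∞)) atTop := by
  by_cases hT : ∀ i, IsTransientWalk τ ∅ a ((finalConf τ ∅ a)^[i] ρ)
  · have hS : ∀ n, (SvisT τ a ρ n x : ℝ≥0∞) = totalVisits τ a ρ n x := fun n => by
      rw [SvisT_eq_totalVisits (fun i _ => hT i), ENat.toENNReal_coe]
    simp only [hS, green_eq_iSup_sum_srw]
    refine iSup_le fun T => ?_
    obtain ⟨C, hC, hCu⟩ := exists_mul_sum_srw_le_add G a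
      (fun n y => ite_add_sum_totalVisits_div_degree_le hτ hρ (fun i _ => hT i) y) T x
    exact le_liminf_div_of_mul_le_add hC hCu
  · obtain ⟨i, hi⟩ := not_forall.1 hT
    have htop : ∀ᶠ n : ℕ in atTop, (SvisT τ a ρ n x : ℝ≥0∞) / n = ⊤ :=
      eventually_atTop.2 ⟨i + 1, fun n hn => by
        rw [SvisT_eq_top (fun h => hi (h i (by omega))), ENat.toENNReal_top,
          ENNReal.top_div_of_ne_top (ENNReal.natCast_ne_top n)]⟩
    rw [liminf_congr htop, liminf_const]
    exact le_top

/-- Schramm's bound: on a locally finite simple connected graph, for every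
initial rotor configuration `ρ` and every vertex `x`,
`liminf_n S_n(ρ,x)/n ≥ G(a,x)` (Green function, `+∞` if the graph is recurrent). -/
theorem green_le_liminf_occupation_rate
    {V : Type*} [DecidableEq V]
    (G : SimpleGraph V) [G.LocallyFinite] (hconn : G.Connected)
    (τ : V → V → V) (hτ : ValidMechanism G ∅ τ) (a : V)
    (ρ : V → V) (hρ : ValidConfig G ∅ ρ) (x : V) :
    green G ∅ a x ≤
      Filter.liminf (fun n : ℕ => (SvisT τ a ρ n x : ℝ≥0∞) / (n : ℝ≥0∞)) atTop :=
  green_le_liminf_occupation_rate_general G τ hτ a ρ hρ x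
end RotorWalk
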